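/- arXiv:1710.01237 — 4 statements merged into one kernel-verified Lean document; each statement's English description precedes it below -/
import Mathlib

section
/- Let N ≥ 1 be an integer, λ_1, …, λ_N > 0 reals, φ_n := exp(λ_n), and for j ∈ ℝ let Λ_j := {ν ∈ ℕ^N : ∑_{n=1}^N (2 λ_n ν_n − log(2 ν_n + 1)) ≤ j}. Let X be a real Hilbert space and let (c_ν)_{ν ∈ ℕ^N} be a family in X satisfying the quasi-optimal coefficient bound ‖c_ν‖_X ≤ C · ∏_{n=1}^N φ_n^{−ν_n} √(2ν_n + 1) for some constant C ≥ 0 and all ν. Then for every 0 < μ < 1 there exists j₀ such that for all j ≥ j₀, writing M := #Λ_j, ∑_{ν ∈ ℕ^N \ Λ_j} ‖c_ν‖_X² ≤ C² · C_u(μ) · M · exp( −2 ( M · N! · ∏_{n=1}^N λ_n / (1 + μ) )^{1/N} ), where C_u(μ) := (4e + 4μe − 2) · e/(e − 1). (By Parseval's identity for an orthonormal family (L_ν) this left-hand side equals the squared error ‖u − ∑_{ν∈Λ_j} c_ν L_ν‖² of the truncated quasi-optimal Legendre expansion.) -/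
/-!
Write `G ν = ∑ₙ (2 λₙ νₙ - log (2 νₙ + 1))`, so that `Λ_j = {G ≤ j}` and
`‖c_ν‖² ≤ C² e^{-G ν}`. Since `log x ≤ c x - 1 - log c`, for every `r < 1` the weight `G`
dominates `2 r ∑ₙ λₙ νₙ - K`. This gives two things. First, `e^{-(1-r) G}` is summable (it is
dominated by a product of geometric series), and splitting `e^{-G} = e^{-r G} e^{-(1-r) G}`
bounds the tail by `C² S e^{-r j}` with `S = ∑_ν e^{-(1-r) G ν}`. Second, `Λ_j` lies in the simplex
`∑ₙ λₙ νₙ ≤ t := (j + K) / (2 r)`, which contains at most `(t + ∑ₙ λₙ)^N / (N! ∏ₙ λₙ)` lattice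
points. With `r³ = (1 + μ)^{-1/N}` the count gives `2 (M N! ∏ₙ λₙ / (1 + μ))^{1/N} ≤
r² (j + K) + O(1)`, and since `r² < r` the tail is eventually below `e^{-2 (…)^{1/N}}`;
the factors `C_u(μ)` and `M` are both at least `1`.
-/

open Real Finset

theorem succ_mul_mul_pow_le_add_pow_sub_pow {y d : ℝ} (hy : 0 ≤ y) (hd : 0 ≤ d) (n : ℕ) :
    (n + 1) * d * y ^ n ≤ (y + d) ^ (n + 1) - y ^ (n + 1) := by
  have hconst : ∑ i ∈ range (n + 1), y ^ i * y ^ (n + 1 - 1 - i) = (n + 1) * y ^ n := by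
    rw [sum_congr rfl fun i hi => by
      rw [← pow_add, Nat.add_sub_cancel,
        Nat.add_sub_cancel' (Nat.lt_succ_iff.mp (mem_range.mp hi))]]
    simp
  calc (n + 1) * d * y ^ n = (∑ i ∈ range (n + 1), y ^ i * y ^ (n + 1 - 1 - i)) * (y + d - y) := by
        rw [hconst]; ring
    _ ≤ (∑ i ∈ range (n + 1), (y + d) ^ i * y ^ (n + 1 - 1 - i)) * (y + d - y) := by
        gcongr <;> linarith
    _ = _ := geom_sum₂_mul _ _ _

-- A Riemann-sum bound for `∫₀^{T + a} x ^ n dx`.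
theorem succ_mul_mul_sum_range_pow_le {a T : ℝ} (ha : 0 ≤ a) (n m : ℕ) (hm : m * a ≤ T) :
    (n + 1) * a * ∑ k ∈ range (m + 1), (T - k * a) ^ n ≤ (T + a) ^ (n + 1) := by
  set c : ℕ → ℝ := fun k => (T - k * a + a) ^ (n + 1)
  have hstep : ∀ k ∈ range (m + 1), (n + 1) * a * (T - k * a) ^ n ≤ c k - c (k + 1) := by
    intro k hk
    have hk : (k : ℝ) ≤ m := by exact_mod_cast Nat.lt_succ_iff.mp (mem_range.mp hk)
    have := succ_mul_mul_pow_le_add_pow_sub_pow (y := T - k * a) (by nlinarith) ha n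
    simp only [c]; push_cast; ring_nf at this ⊢; linarith
  have hlast : 0 ≤ c (m + 1) := by simp only [c]; push_cast; apply pow_nonneg; linarith
  calc (n + 1) * a * ∑ k ∈ range (m + 1), (T - k * a) ^ n
      ≤ ∑ k ∈ range (m + 1), (c k - c (k + 1)) := by rw [mul_sum]; exact sum_le_sum hstep
    _ = c 0 - c (m + 1) := sum_range_sub' c _
    _ ≤ (T + a) ^ (n + 1) := by simp only [c, CharP.cast_eq_zero, zero_mul, sub_zero]; linarith

theorem card_mul_factorial_mul_prod_le {N : ℕ} {a : Fin N → ℝ} (ha : ∀ n, 0 < a n) {t : ℝ}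
    (ht : 0 ≤ t) (s : Finset (Fin N → ℕ)) (hs : ∀ ν ∈ s, ∑ n, a n * ν n ≤ t) :
    (s.card : ℝ) * N.factorial * ∏ n, a n ≤ (t + ∑ n, a n) ^ N := by
  induction N generalizing t with
  | zero =>
    have : s.card ≤ 1 := card_le_one.mpr fun x _ y _ => Subsingleton.elim x y
    simpa using (Nat.cast_le (α := ℝ)).2 this
  | succ n ih =>
    classical
    set m := ⌊t / a 0⌋₊
    have hma : m * a 0 ≤ t := (le_div_iff₀ (ha 0)).1 (Nat.floor_le (div_nonneg ht (ha 0).le))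
    have htail : ∀ ν ∈ s, ∑ i : Fin n, a i.succ * ν i.succ ≤ t - ν 0 * a 0 := by
      intro ν hν
      have := hs ν hν
      rw [Fin.sum_univ_succ] at this
      linarith
    have hmaps : Set.MapsTo (fun ν : Fin (n + 1) → ℕ => ν 0) s (range (m + 1)) := by
      intro ν hν
      have : 0 ≤ ∑ i : Fin n, a i.succ * ν i.succ :=
        sum_nonneg fun i _ => mul_nonneg (ha _).le (Nat.cast_nonneg _)
      simpa [Nat.lt_succ_iff] using
        Nat.le_floor <| (le_div_iff₀ (ha 0)).2 <| by linarith [htail ν hν]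
    have hfiber : ∀ k ∈ range (m + 1),
        ({ν ∈ s | ν 0 = k}.card : ℝ) * n.factorial * ∏ i : Fin n, a i.succ ≤
          (t + ∑ i : Fin n, a i.succ - k * a 0) ^ n := by
      intro k hk
      have hk : (k : ℝ) * a 0 ≤ t := by
        have : (k : ℝ) ≤ m := by exact_mod_cast Nat.lt_succ_iff.mp (mem_range.mp hk)
        nlinarith [ha 0]
      have hinj : Set.InjOn Fin.tail (({ν ∈ s | ν 0 = k} : Finset _) : Set (Fin (n + 1) → ℕ)) := by
        intro ν hν ν' hν' h
        rw [coe_filter] at hν hν'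
        rw [← Fin.cons_self_tail ν, ← Fin.cons_self_tail ν', h, hν.2, hν'.2]
      rw [← card_image_of_injOn hinj]
      convert ih (fun i => ha i.succ) (t := t - k * a 0) (by linarith) _ ?_ using 2
      · ring
      · intro τ hτ
        obtain ⟨ν, hν, rfl⟩ := mem_image.mp hτ
        rw [mem_filter] at hν
        simpa [Fin.tail, hν.2] using htail ν hν.1
    calc (s.card : ℝ) * (n + 1).factorial * ∏ i, a i
        = (n + 1) * a 0 * ∑ k ∈ range (m + 1),
            ({ν ∈ s | ν 0 = k}.card : ℝ) * n.factorial * ∏ i : Fin n, a i.succ := by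
          rw [card_eq_sum_card_fiberwise hmaps, Nat.factorial_succ, Fin.prod_univ_succ]
          push_cast
          rw [sum_mul, sum_mul, mul_sum]
          refine sum_congr rfl fun k _ => by ring
      _ ≤ (n + 1) * a 0 * ∑ k ∈ range (m + 1), (t + ∑ i : Fin n, a i.succ - k * a 0) ^ n := by
          gcongr with k hk
          · have := ha 0; positivity
          · exact hfiber k hk
      _ ≤ (t + ∑ i : Fin n, a i.succ + a 0) ^ (n + 1) := by
          have : 0 ≤ ∑ i : Fin n, a i.succ := sum_nonneg fun i _ => (ha _).le
          exact succ_mul_mul_sum_range_pow_le (ha 0).le n m (by linarith)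
      _ = (t + ∑ i, a i) ^ (n + 1) := by rw [Fin.sum_univ_succ]; ring

theorem finite_setOf_sum_mul_le {N : ℕ} {a : Fin N → ℝ} (ha : ∀ n, 0 < a n) (t : ℝ) :
    {ν : Fin N → ℕ | ∑ n, a n * ν n ≤ t}.Finite := by
  refine (Set.finite_Iic fun n => ⌊t / a n⌋₊).subset fun ν hν n => Nat.le_floor ?_
  rw [le_div_iff₀ (ha n), mul_comm]
  refine le_trans ?_ hν
  exact single_le_sum (f := fun n => a n * ν n)
    (fun i _ => mul_nonneg (ha i).le (Nat.cast_nonneg _)) (mem_univ n)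

theorem sublevel_finite_and_ncard_mul_le {N : ℕ} {g : (Fin N → ℕ) → ℝ} {a : Fin N → ℝ}
    {s K : ℝ} (ha : ∀ n, 0 < a n) (hs : 0 < s)
    (hg : ∀ ν, s * ∑ n, a n * ν n - K ≤ g ν) {j : ℝ} (hj : 0 ≤ j + K) :
    {ν | g ν ≤ j}.Finite ∧
      ({ν | g ν ≤ j}.ncard : ℝ) * N.factorial * ∏ n, a n ≤ ((j + K) / s + ∑ n, a n) ^ N := by
  have hsimplex : ∀ ν, g ν ≤ j → ∑ n, a n * ν n ≤ (j + K) / s := fun ν hν => by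
    rw [le_div_iff₀ hs]; linarith [hg ν]
  have hfin : {ν | g ν ≤ j}.Finite := (finite_setOf_sum_mul_le ha _).subset hsimplex
  refine ⟨hfin, ?_⟩
  rw [Set.ncard_eq_toFinset_card _ hfin]
  exact card_mul_factorial_mul_prod_le ha (by positivity) _ fun ν hν =>
    hsimplex ν (hfin.mem_toFinset.1 hν)

theorem summable_prod_apply {ι κ : Type*} [Fintype ι] {F : ι → κ → ℝ}
    (hF0 : ∀ i k, 0 ≤ F i k) (hF : ∀ i, Summable (F i)) :
    Summable fun x : ι → κ => ∏ i, F i (x i) := by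
  classical
  refine summable_of_sum_le (c := ∏ i, ∑' k, F i k)
    (fun x => prod_nonneg fun i _ => hF0 i _) fun u => ?_
  calc ∑ x ∈ u, ∏ i, F i (x i)
      ≤ ∑ x ∈ Fintype.piFinset fun i => u.image (· i), ∏ i, F i (x i) :=
        sum_le_sum_of_subset_of_nonneg
          (fun x hx => Fintype.mem_piFinset.2 fun i => mem_image_of_mem _ hx)
          fun x _ _ => prod_nonneg fun i _ => hF0 i _
    _ = ∏ i, ∑ k ∈ u.image (· i), F i k := (prod_univ_sum _ _).symm
    _ ≤ ∏ i, ∑' k, F i k := prod_le_prod (fun i _ => sum_nonneg fun k _ => hF0 i k)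
        fun i _ => (hF i).sum_le_tsum _ fun k _ => hF0 i k

theorem summable_exp_neg_mul_of_linear_le {N : ℕ} {g : (Fin N → ℕ) → ℝ} {a : Fin N → ℝ}
    (ha : ∀ n, 0 < a n) {s K t : ℝ} (hs : 0 < s) (ht : 0 < t)
    (hg : ∀ ν, s * ∑ n, a n * ν n - K ≤ g ν) :
    Summable fun ν => exp (-(t * g ν)) := by
  have hgeom : Summable fun ν : Fin N → ℕ => ∏ n, exp (-(t * s * a n)) ^ ν n :=
    summable_prod_apply (fun _ _ => by positivity) fun n =>
      summable_geometric_of_lt_one (exp_pos _).le <| exp_lt_one_iff.2 <| by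
        have := ha n; have := mul_pos ht hs; nlinarith
  refine (hgeom.mul_left (exp (t * K))).of_nonneg_of_le (fun _ => (exp_pos _).le) fun ν => ?_
  calc exp (-(t * g ν)) ≤ exp (t * K + ∑ n, ν n * -(t * s * a n)) := by
        have hlin : ∑ n, ν n * -(t * s * a n) = -(t * (s * ∑ n, a n * ν n)) := by
          rw [mul_sum, mul_sum, ← sum_neg_distrib]
          exact sum_congr rfl fun n _ => by ring
        rw [exp_le_exp, hlin]
        nlinarith [hg ν]
    _ = _ := by simp only [exp_add, exp_sum, exp_nat_mul]

theorem tsum_not_le_le_mul_exp {ι : Type*} {f g : ι → ℝ} {D r : ℝ} (hD : 0 ≤ D) (hr : 0 ≤ r)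
    (hf0 : ∀ i, 0 ≤ f i) (hfg : ∀ i, f i ≤ D * exp (-g i))
    (hsum : Summable fun i => exp (-((1 - r) * g i))) (j : ℝ) :
    ∑' i : {i // ¬ g i ≤ j}, f i ≤ D * (∑' i, exp (-((1 - r) * g i))) * exp (-(r * j)) := by
  have hbound : ∀ i : {i // ¬ g i ≤ j}, f i ≤ D * exp (-(r * j)) * exp (-((1 - r) * g i)) := by
    rintro ⟨i, hi⟩
    calc f i ≤ D * (exp (-(r * g i)) * exp (-((1 - r) * g i))) := by
          rw [← exp_add]; convert hfg i using 3; ring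
      _ ≤ D * (exp (-(r * j)) * exp (-((1 - r) * g i))) := by
          gcongr; exact le_of_lt (not_le.1 hi)
      _ = _ := by ring
  have hsub := (hsum.subtype {i | ¬ g i ≤ j}).mul_left (D * exp (-(r * j)))
  calc ∑' i : {i // ¬ g i ≤ j}, f i
      ≤ ∑' i : {i // ¬ g i ≤ j}, D * exp (-(r * j)) * exp (-((1 - r) * g i)) :=
        (hsub.of_nonneg_of_le (fun i : {i // ¬ g i ≤ j} => hf0 i.1) hbound).tsum_le_tsum hbound hsub
    _ ≤ D * exp (-(r * j)) * ∑' i, exp (-((1 - r) * g i)) := by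
        rw [tsum_mul_left]
        gcongr
        exact hsum.tsum_subtype_le _ {i | ¬ g i ≤ j} fun i => (exp_pos _).le
    _ = _ := by ring

noncomputable def quasiOptimalWeight {N : ℕ} (lam : Fin N → ℝ) (ν : Fin N → ℕ) : ℝ :=
  ∑ n, (2 * lam n * ν n - log (2 * ν n + 1))

theorem Real.log_le_mul_sub_one_sub_log {c x : ℝ} (hc : 0 < c) (hx : 0 < x) :
    log x ≤ c * x - 1 - log c := by
  have := log_le_sub_one_of_pos (mul_pos hc hx)
  rw [log_mul hc.ne' hx.ne'] at this
  linarith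

theorem exists_two_mul_sum_sub_le_quasiOptimalWeight {N : ℕ} {lam : Fin N → ℝ}
    (hlam : ∀ n, 0 < lam n) {s : ℝ} (hs : s < 1) :
    ∃ K, 0 ≤ K ∧ ∀ ν, 2 * s * ∑ n, lam n * ν n - K ≤ quasiOptimalWeight lam ν := by
  set c := fun n => (1 - s) * lam n
  have hc : ∀ n, 0 < c n := fun n => mul_pos (sub_pos.2 hs) (hlam n)
  refine ⟨∑ n, (c n - 1 - log (c n)),
    sum_nonneg fun n _ => by linarith [log_le_sub_one_of_pos (hc n)], fun ν => ?_⟩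
  rw [mul_sum, quasiOptimalWeight, ← sum_sub_distrib]
  refine sum_le_sum fun n _ => ?_
  have := log_le_mul_sub_one_sub_log (hc n) (x := 2 * ν n + 1) (by positivity)
  simp only [c] at this ⊢
  linear_combination this

theorem sq_le_sq_mul_exp_neg_quasiOptimalWeight {N : ℕ} {lam : Fin N → ℝ} {ν : Fin N → ℕ}
    {x C : ℝ} (hx : 0 ≤ x) (h : x ≤ C * ∏ n, exp (lam n) ^ (-(ν n : ℝ)) * √(2 * (ν n : ℝ) + 1)) :
    x ^ 2 ≤ C ^ 2 * exp (-quasiOptimalWeight lam ν) := by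
  have hprod : (∏ n, exp (lam n) ^ (-(ν n : ℝ)) * √(2 * (ν n : ℝ) + 1)) ^ 2
      = exp (-quasiOptimalWeight lam ν) := by
    rw [← prod_pow, quasiOptimalWeight, ← sum_neg_distrib, exp_sum]
    refine prod_congr rfl fun n _ => ?_
    have hx : (0 : ℝ) < 2 * ν n + 1 := by positivity
    rw [mul_pow, sq_sqrt hx.le, ← exp_mul, ← exp_nat_mul, neg_sub, sub_eq_add_neg, exp_add,
      exp_log hx, mul_comm]
    congr 2
    push_cast
    ring
  rw [← hprod, ← mul_pow]
  exact pow_le_pow_left₀ hx h 2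

theorem exists_pow_three_mul_rpow_eq_one {μ : ℝ} (hμ : 0 < μ) {N : ℕ} (hN : N ≠ 0) :
    ∃ r : ℝ, 0 < r ∧ r < 1 ∧ r ^ 3 * (1 + μ) ^ ((1 : ℝ) / N) = 1 := by
  have hN' : (0 : ℝ) < N := by positivity
  have hexp : -1 / (3 * N : ℝ) < 0 := div_neg_of_neg_of_pos (by norm_num) (by positivity)
  refine ⟨(1 + μ) ^ (-1 / (3 * N : ℝ)), by positivity,
    rpow_lt_one_of_one_lt_of_neg (by linarith) hexp, ?_⟩
  rw [← rpow_natCast, ← rpow_mul (by positivity), ← rpow_add (by positivity)]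
  convert rpow_zero (1 + μ)
  field_simp
  push_cast
  ring

theorem exists_forall_mul_exp_le_exp_rpow {N : ℕ} (hN : N ≠ 0) {μ r S K L : ℝ} (hμ : 0 < μ)
    (hr0 : 0 < r) (hr1 : r < 1) (hr : r ^ 3 * (1 + μ) ^ ((1 : ℝ) / N) = 1) (hS : 0 < S)
    (hK : 0 ≤ K) (hL : 0 ≤ L) :
    ∃ j₀, ∀ j, j₀ ≤ j → ∀ P, 0 ≤ P → P ≤ ((j + K) / (2 * r) + L) ^ N →
      S * exp (-(r * j)) ≤ exp (-2 * (P / (1 + μ)) ^ ((1 : ℝ) / N)) := by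
  refine ⟨max 0 ((log S + K + 2 * L) / (r - r ^ 2)), fun j hj P hP hPB => ?_⟩
  have hgap : 0 < r - r ^ 2 := by nlinarith
  have hj0 : 0 ≤ j := le_of_max_le_left hj
  have hjbig : log S + K + 2 * L ≤ j * (r - r ^ 2) := (div_le_iff₀ hgap).1 (le_of_max_le_right hj)
  set B := (j + K) / (2 * r) + L
  have hB : 0 ≤ B := by positivity
  have hroot : (P / (1 + μ)) ^ ((1 : ℝ) / N) ≤ B * r ^ 3 := by
    calc (P / (1 + μ)) ^ ((1 : ℝ) / N) ≤ (B ^ N / (1 + μ)) ^ ((1 : ℝ) / N) := by gcongr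
      _ = B * (r ^ 3 * (1 + μ) ^ ((1 : ℝ) / N)) / (1 + μ) ^ ((1 : ℝ) / N) := by
        rw [div_rpow (by positivity) (by positivity), hr, mul_one, one_div,
          pow_rpow_inv_natCast hB hN]
      _ = B * r ^ 3 := by field_simp
  have hr2 : r ^ 2 ≤ 1 := pow_le_one₀ hr0.le hr1.le
  have hr3 : r ^ 3 ≤ 1 := pow_le_one₀ hr0.le hr1.le
  rw [← exp_log hS, ← exp_add, exp_le_exp]
  calc log S + -(r * j) ≤ -((j + K) * r ^ 2) - 2 * L * r ^ 3 := by nlinarith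
    _ = -2 * (B * r ^ 3) := by simp only [B]; field_simp; ring
    _ ≤ -2 * (P / (1 + μ)) ^ ((1 : ℝ) / N) := by linarith

theorem one_le_mul_exp_one_div_exp_one_sub_one {μ : ℝ} (hμ : 0 ≤ μ) :
    1 ≤ (4 * exp 1 + 4 * μ * exp 1 - 2) * (exp 1 / (exp 1 - 1)) := by
  have he : 2 ≤ exp 1 := by linarith [add_one_le_exp 1]
  have h1 : 1 ≤ exp 1 / (exp 1 - 1) := by rw [le_div_iff₀ (by linarith)]; linarith
  have h2 : 1 ≤ 4 * exp 1 + 4 * μ * exp 1 - 2 := by nlinarith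
  nlinarith

theorem stmt_1_general {X : Type*} [NormedAddCommGroup X]
    (N : ℕ) (hN : 1 ≤ N) (lam : Fin N → ℝ) (hlam : ∀ n, 0 < lam n)
    (φ : Fin N → ℝ) (hφ : ∀ n, φ n = Real.exp (lam n))
    (Λ : ℝ → Set (Fin N → ℕ))
    (hΛ : ∀ j : ℝ, Λ j = {ν : Fin N → ℕ |
      ∑ n, (2 * lam n * (ν n : ℝ) - Real.log (2 * (ν n : ℝ) + 1)) ≤ j})
    (C : ℝ) (c : (Fin N → ℕ) → X)
    (hc : ∀ ν : Fin N → ℕ,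
      ‖c ν‖ ≤ C * ∏ n, (φ n) ^ (-(ν n : ℝ)) * Real.sqrt (2 * (ν n : ℝ) + 1))
    (μ : ℝ) (hμ0 : 0 < μ) :
    ∃ j₀ : ℝ, ∀ j : ℝ, j₀ ≤ j →
      (∑' ν : {ν : Fin N → ℕ // ν ∉ Λ j}, ‖c ν.1‖ ^ 2)
        ≤ C ^ 2 * ((4 * Real.exp 1 + 4 * μ * Real.exp 1 - 2) * (Real.exp 1 / (Real.exp 1 - 1)))
            * ((Λ j).ncard : ℝ)
            * Real.exp (-2 * ((((Λ j).ncard : ℝ) * (N.factorial : ℝ) * ∏ n, lam n)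
                / (1 + μ)) ^ ((1 : ℝ) / (N : ℝ))) := by
  obtain rfl : φ = fun n => exp (lam n) := funext hφ
  obtain rfl : Λ = fun j => {ν | quasiOptimalWeight lam ν ≤ j} := funext hΛ
  have hN0 : N ≠ 0 := Nat.one_le_iff_ne_zero.mp hN
  obtain ⟨r, hr0, hr1, hr⟩ := exists_pow_three_mul_rpow_eq_one hμ0 hN0
  obtain ⟨K, hK0, hGK⟩ := exists_two_mul_sum_sub_le_quasiOptimalWeight hlam hr1
  have hsum := summable_exp_neg_mul_of_linear_le hlam (by positivity) (sub_pos.2 hr1) hGK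
  have hS : 0 < ∑' ν, exp (-((1 - r) * quasiOptimalWeight lam ν)) :=
    hsum.tsum_pos (fun _ => (exp_pos _).le) 0 (exp_pos _)
  obtain ⟨j₀, hj₀⟩ := exists_forall_mul_exp_le_exp_rpow hN0 hμ0 hr0 hr1 hr hS hK0
    (sum_nonneg fun n _ => (hlam n).le)
  refine ⟨max 0 j₀, fun j hj => ?_⟩
  have hj0 : 0 ≤ j := le_of_max_le_left hj
  obtain ⟨hfin, hcount⟩ :=
    sublevel_finite_and_ncard_mul_le hlam (by positivity) hGK (j := j) (by positivity)
  beta_reduce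
  set M : ℝ := ({ν | quasiOptimalWeight lam ν ≤ j}.ncard : ℝ)
  set E := exp (-2 * (M * N.factorial * (∏ n, lam n) / (1 + μ)) ^ ((1 : ℝ) / N))
  have hM : 1 ≤ M :=
    Nat.one_le_cast.2 ((Set.ncard_pos hfin).2 ⟨0, by simpa [quasiOptimalWeight] using hj0⟩)
  have hCuM := one_le_mul_of_one_le_of_one_le (one_le_mul_exp_one_div_exp_one_sub_one hμ0.le) hM
  calc _ ≤ C ^ 2 * (∑' ν, exp (-((1 - r) * quasiOptimalWeight lam ν))) * exp (-(r * j)) :=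
        tsum_not_le_le_mul_exp (sq_nonneg C) hr0.le (fun _ => sq_nonneg _)
          (fun ν => sq_le_sq_mul_exp_neg_quasiOptimalWeight (norm_nonneg _) (hc ν)) hsum j
    _ ≤ C ^ 2 * E := by
        rw [mul_assoc]
        have := prod_nonneg fun n (_ : n ∈ univ) => (hlam n).le
        gcongr
        exact hj₀ j (le_of_max_le_right hj) _ (by positivity) hcount
    _ ≤ _ := by nlinarith [mul_le_mul_of_nonneg_left hCuM (by positivity : 0 ≤ C ^ 2 * E)]

/-- Let `N ≥ 1`, `λ_n > 0`, `φ_n = exp(λ_n)`, and for `j ∈ ℝ` let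
`Λ_j = {ν ∈ ℕ^N : ∑_n (2 λ_n ν_n − log(2 ν_n + 1)) ≤ j}`.  Let `X` be a real Hilbert
space and `(c_ν)` a family in `X` with `‖c_ν‖ ≤ C · ∏_n φ_n^{−ν_n} √(2 ν_n + 1)`
for some `C ≥ 0`.  Then for every `0 < μ < 1` there is `j₀` such that for all
`j ≥ j₀`, with `M = #Λ_j`,
`∑_{ν ∉ Λ_j} ‖c_ν‖² ≤ C² · C_u(μ) · M · exp(−2 (M · N! · ∏_n λ_n / (1 + μ))^{1/N})`,
where `C_u(μ) = (4e + 4μe − 2) · e/(e−1)`. -/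
theorem stmt_1 {X : Type*} [NormedAddCommGroup X] [InnerProductSpace ℝ X] [CompleteSpace X]
    (N : ℕ) (hN : 1 ≤ N) (lam : Fin N → ℝ) (hlam : ∀ n, 0 < lam n)
    (φ : Fin N → ℝ) (hφ : ∀ n, φ n = Real.exp (lam n))
    (Λ : ℝ → Set (Fin N → ℕ))
    (hΛ : ∀ j : ℝ, Λ j = {ν : Fin N → ℕ |
      ∑ n, (2 * lam n * (ν n : ℝ) - Real.log (2 * (ν n : ℝ) + 1)) ≤ j})
    (C : ℝ) (hC : 0 ≤ C) (c : (Fin N → ℕ) → X)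
    (hc : ∀ ν : Fin N → ℕ,
      ‖c ν‖ ≤ C * ∏ n, (φ n) ^ (-(ν n : ℝ)) * Real.sqrt (2 * (ν n : ℝ) + 1))
    (μ : ℝ) (hμ0 : 0 < μ) (hμ1 : μ < 1) :
    ∃ j₀ : ℝ, ∀ j : ℝ, j₀ ≤ j →
      (∑' ν : {ν : Fin N → ℕ // ν ∉ Λ j}, ‖c ν.1‖ ^ 2)
        ≤ C ^ 2 * ((4 * Real.exp 1 + 4 * μ * Real.exp 1 - 2) * (Real.exp 1 / (Real.exp 1 - 1)))
            * ((Λ j).ncard : ℝ)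
            * Real.exp (-2 * ((((Λ j).ncard : ℝ) * (N.factorial : ℝ) * ∏ n, lam n)
                / (1 + μ)) ^ ((1 : ℝ) / (N : ℝ))) :=
  stmt_1_general N hN lam hlam φ hφ Λ hΛ C c hc μ hμ0
end

section
/- Let N ≥ 1 and let Λ ⊂ ℕ^N be a finite, nonempty, downward-closed (lower) set with M := #Λ. Then M ≤ ∑_{ν ∈ Λ} ∏_{n=1}^N (2 ν_n + 1) ≤ M². (The middle quantity is Z(Λ) = ∑_{ν∈Λ} ‖L_ν‖_{L^∞}² for the L²-normalized tensor-product Legendre polynomials on [−1,1]^N, since ‖L_ν‖_{L^∞}² = ∏_n (2ν_n+1).) -/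
/-!
The lower bound holds because every summand is at least `1`. For the upper bound, read
`∏ n, (2 ν_n + 1)` as the number of `t ∈ ℕ^N` with `t ≤ 2ν`, and fold each coordinate of such a `t`
onto the pair `(min(t_n, ν_n), min(2ν_n - t_n, ν_n))`. This sends the pairs `(ν, t)` injectively
into `Λ × Λ`: both components lie below `ν`, hence in the lower set `Λ`, their coordinatewise
maximum is `ν`, and `t = a + (ν - b)` is recovered from the pair `(a, b)`.
-/

open Finset

def foldPair (ν t : ℕ) : ℕ × ℕ := (min t ν, min (2 * ν - t) ν)

lemma foldPair_injOn : Set.InjOn (fun p : ℕ × ℕ => foldPair p.1 p.2) {p | p.2 ≤ 2 * p.1} := by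
  rintro ⟨ν, t⟩ (ht : t ≤ 2 * ν) ⟨ν', t'⟩ (ht' : t' ≤ 2 * ν') h
  simp only [foldPair, Prod.mk.injEq] at h
  ext <;> omega

section LowerSet

variable {ι : Type*} [Fintype ι] [DecidableEq ι]

def legendreBox (Λ : Finset (ι → ℕ)) : Finset (Σ _ : ι → ℕ, ι → ℕ) :=
  Λ.sigma fun ν => Fintype.piFinset fun i => range (2 * ν i + 1)

lemma card_legendreBox (Λ : Finset (ι → ℕ)) :
    #(legendreBox Λ) = ∑ ν ∈ Λ, ∏ i, (2 * ν i + 1) := by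
  simp [legendreBox, card_sigma, Fintype.card_piFinset]

def foldVec (p : Σ _ : ι → ℕ, ι → ℕ) : (ι → ℕ) × (ι → ℕ) :=
  (fun i => (foldPair (p.1 i) (p.2 i)).1, fun i => (foldPair (p.1 i) (p.2 i)).2)

lemma foldVec_injOn (Λ : Finset (ι → ℕ)) : Set.InjOn foldVec (↑(legendreBox Λ) : Set (Σ _ : ι → ℕ, ι → ℕ)) := by
  rintro ⟨ν, t⟩ hp ⟨ν', t'⟩ hp' h
  simp only [legendreBox, coe_sigma, Set.mem_sigma_iff, mem_coe, Fintype.mem_piFinset,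
    mem_range, Nat.lt_succ_iff] at hp hp'
  simp only [foldVec, Prod.mk.injEq, funext_iff] at h
  have hcoord : ∀ i, (ν i, t i) = (ν' i, t' i) := fun i =>
    foldPair_injOn (hp.2 i) (hp'.2 i) (Prod.ext (h.1 i) (h.2 i))
  obtain rfl : ν = ν' := funext fun i => congrArg Prod.fst (hcoord i)
  obtain rfl : t = t' := funext fun i => congrArg Prod.snd (hcoord i)
  rfl

lemma foldVec_mapsTo {Λ : Finset (ι → ℕ)} (hΛ : IsLowerSet (Λ : Set (ι → ℕ))) :
    Set.MapsTo foldVec (↑(legendreBox Λ) : Set (Σ _ : ι → ℕ, ι → ℕ)) ↑(Λ ×ˢ Λ) := by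
  rintro ⟨ν, t⟩ hp
  have hν : ν ∈ Λ := (mem_sigma.1 hp).1
  exact mem_product.2
    ⟨hΛ (fun _ => min_le_right _ _) hν, hΛ (fun _ => min_le_right _ _) hν⟩

lemma sum_prod_two_mul_add_one_le_card_sq {Λ : Finset (ι → ℕ)}
    (hΛ : IsLowerSet (Λ : Set (ι → ℕ))) : ∑ ν ∈ Λ, ∏ i, (2 * ν i + 1) ≤ #Λ ^ 2 := by
  rw [← card_legendreBox, sq, ← card_product]
  exact card_le_card_of_injOn foldVec (foldVec_mapsTo hΛ) (foldVec_injOn Λ)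

end LowerSet

theorem stmt_3_general (N : ℕ) (Λ : Finset (Fin N → ℕ))
    (hdc : ∀ ν ∈ Λ, ∀ μ : Fin N → ℕ, (∀ n, μ n ≤ ν n) → μ ∈ Λ) :
    Λ.card ≤ ∑ ν ∈ Λ, ∏ n, (2 * ν n + 1) ∧
    ∑ ν ∈ Λ, ∏ n, (2 * ν n + 1) ≤ Λ.card ^ 2 := by
  refine ⟨?_, sum_prod_two_mul_add_one_le_card_sq fun ν μ hμ hν => hdc ν hν μ hμ⟩
  simpa using card_nsmul_le_sum Λ _ 1 fun ν _ => Nat.one_le_iff_ne_zero.2 (by positivity)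

/-- For a finite, nonempty, downward-closed set `Λ ⊂ ℕ^N`
with `M = #Λ`, one has `M ≤ ∑_{ν ∈ Λ} ∏_n (2 ν_n + 1) ≤ M²`.
(The middle quantity is `Z(Λ)` for L²-normalized Legendre polynomials.) -/
theorem stmt_3 (N : ℕ) (hN : 1 ≤ N) (Λ : Finset (Fin N → ℕ)) (hne : Λ.Nonempty)
    (hdc : ∀ ν ∈ Λ, ∀ μ : Fin N → ℕ, (∀ n, μ n ≤ ν n) → μ ∈ Λ) :
    Λ.card ≤ ∑ ν ∈ Λ, ∏ n, (2 * ν n + 1) ∧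
    ∑ ν ∈ Λ, ∏ n, (2 * ν n + 1) ≤ Λ.card ^ 2 :=
  stmt_3_general N Λ hdc
end

section
/- Let N ≥ 1 and let Λ ⊂ ℕ^N be a finite, nonempty, downward-closed (lower) set with M := #Λ. Then ∑_{ν ∈ Λ} 2^{#{n : ν_n ≥ 1}} ≤ min( M^{log 3 / log 2}, 2^N · M ). (The left-hand side is Z(Λ) = ∑_{ν∈Λ} ‖T_ν‖_{L^∞}² for the L²-normalized tensor-product Chebyshev polynomials, since ‖T_ν‖_{L^∞}² = ∏_n w(ν_n) with w(0)=1 and w(k)=2 for k ≥ 1.) -/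
/-!
Write `Z(Λ) = ∑_{ν ∈ Λ} supportWeight ν` and `β = log₂ 3`. Slicing a lower set `Λ ⊂ ℕ^(N+1)` by its
first coordinate gives lower sets `Λ_k ⊂ ℕ^N` with `Λ_k ⊆ Λ_0`, and
`Z(Λ) = Z(Λ_0) + 2 ∑_{k ≥ 1} Z(Λ_k)`.
By induction on `N` it therefore suffices that `m₀ ^ β + 2 ∑ mₖ ^ β ≤ (m₀ + ∑ mₖ) ^ β` whenever
`0 ≤ mₖ ≤ m₀`. Adding one `mₖ` at a time, this reduces to `a ^ β + (2 ^ β - 1) b ^ β ≤ (a + b) ^ β`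
for `0 ≤ b ≤ a`, which compares the increments of the convex function `x ^ β` over `[b, 2b]` and
`[a, a + b]`. The bound `Z(Λ) ≤ 2 ^ N · #Λ` holds termwise.
-/

open Finset

theorem ConvexOn.increment_mono {s : Set ℝ} {f : ℝ → ℝ} (hf : ConvexOn ℝ s f) {x y d : ℝ}
    (hx : x ∈ s) (hy : y ∈ s) (hxd : x + d ∈ s) (hyd : y + d ∈ s) (hxy : x ≤ y) (hd : 0 ≤ d) :
    f (x + d) - f x ≤ f (y + d) - f y := by
  rcases hd.eq_or_lt with rfl | hd
  · simp
  have h₁ : (f (x + d) - f x) / d ≤ (f (y + d) - f x) / (y + d - x) := by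
    simpa using hf.secant_mono hx hxd hyd (by linarith) (by linarith) (by linarith)
  have h₂ : (f (y + d) - f x) / (y + d - x) ≤ (f (y + d) - f y) / d := by
    have := hf.secant_mono hyd hx hy (by linarith) (by linarith) hxy
    rwa [← neg_div_neg_eq, neg_sub, neg_sub, ← neg_div_neg_eq (f y - _), neg_sub, neg_sub,
      add_sub_cancel_left] at this
  exact (div_le_div_iff_of_pos_right hd).mp (h₁.trans h₂)

theorem rpow_add_mul_rpow_le_add_rpow {p a b : ℝ} (hp : 1 ≤ p) (hb : 0 ≤ b) (hba : b ≤ a) :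
    a ^ p + (2 ^ p - 1) * b ^ p ≤ (a + b) ^ p := by
  have ha : 0 ≤ a := hb.trans hba
  have h := (convexOn_rpow hp).increment_mono (x := b) (y := a) (d := b) hb ha
    (add_nonneg hb hb) (add_nonneg ha hb) hba hb
  rw [← two_mul, Real.mul_rpow zero_le_two hb] at h
  linarith

theorem rpow_add_mul_sum_rpow_le {ι : Type*} {p x : ℝ} (hp : 1 ≤ p) (s : Finset ι) (m : ι → ℝ)
    (hm₀ : ∀ i ∈ s, 0 ≤ m i) (hmx : ∀ i ∈ s, m i ≤ x) :
    x ^ p + (2 ^ p - 1) * ∑ i ∈ s, m i ^ p ≤ (x + ∑ i ∈ s, m i) ^ p := by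
  induction s using Finset.cons_induction with
  | empty => simp
  | cons j s _ ih =>
    simp only [mem_cons, forall_eq_or_imp] at hm₀ hmx
    have hS : 0 ≤ ∑ i ∈ s, m i := sum_nonneg hm₀.2
    have hstep := rpow_add_mul_rpow_le_add_rpow hp hm₀.1 (hmx.1.trans (le_add_of_nonneg_right hS))
    rw [sum_cons, sum_cons, show x + (m j + ∑ i ∈ s, m i) = x + ∑ i ∈ s, m i + m j by ring]
    linarith [mul_add (2 ^ p - 1) (m j ^ p) (∑ i ∈ s, m i ^ p), ih hm₀.2 hmx.2]

noncomputable def supportWeight {N : ℕ} (ν : Fin N → ℕ) : ℝ :=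
  2 ^ (univ.filter fun n => 1 ≤ ν n).card

theorem supportWeight_cons {N : ℕ} (k : ℕ) (μ : Fin N → ℕ) :
    supportWeight (Fin.cons (α := fun _ => ℕ) k μ) =
      (if k = 0 then 1 else 2) * supportWeight μ := by
  simp only [supportWeight, card_filter, Fin.sum_univ_succ, Fin.cons_zero, Fin.cons_succ, pow_add]
  rcases Nat.eq_zero_or_pos k with rfl | hk
  · simp
  · simp [hk.ne']

theorem supportWeight_le_two_pow {N : ℕ} (ν : Fin N → ℕ) : supportWeight ν ≤ 2 ^ N := by
  unfold supportWeight
  exact pow_le_pow_right₀ one_le_two ((card_filter_le _ _).trans (card_fin N).le)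

noncomputable def consSlice {N : ℕ} (Λ : Finset (Fin (N + 1) → ℕ)) (k : ℕ) : Finset (Fin N → ℕ) :=
  Λ.preimage (Fin.cons (α := fun _ => ℕ) k) (Fin.cons_right_injective (α := fun _ => ℕ) k).injOn

section ConsSlice

variable {N : ℕ} {Λ : Finset (Fin (N + 1) → ℕ)}

@[simp]
theorem mem_consSlice {k : ℕ} {μ : Fin N → ℕ} :
    μ ∈ consSlice Λ k ↔ Fin.cons (α := fun _ => ℕ) k μ ∈ Λ :=
  mem_preimage

theorem isLowerSet_consSlice (hΛ : IsLowerSet (Λ : Set (Fin (N + 1) → ℕ))) (k : ℕ) :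
    IsLowerSet (consSlice Λ k : Set (Fin N → ℕ)) := by
  rw [consSlice, coe_preimage]
  exact hΛ.preimage fun μ μ' h => Fin.cons_le_cons.mpr ⟨le_rfl, h⟩

theorem consSlice_subset_consSlice_zero (hΛ : IsLowerSet (Λ : Set (Fin (N + 1) → ℕ))) (k : ℕ) :
    consSlice Λ k ⊆ consSlice Λ 0 := fun μ hμ => by
  rw [mem_consSlice] at hμ ⊢
  exact hΛ (Fin.cons_le_cons.mpr ⟨k.zero_le, le_rfl⟩) hμ

theorem sum_eq_sum_sum_consSlice {M : Type*} [AddCommMonoid M] (f : (Fin (N + 1) → ℕ) → M)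
    {t : Finset ℕ} (ht : ∀ ν ∈ Λ, ν 0 ∈ t) :
    ∑ ν ∈ Λ, f ν = ∑ k ∈ t, ∑ μ ∈ consSlice Λ k, f (Fin.cons k μ) := by
  rw [← sum_fiberwise_of_maps_to ht]
  refine sum_congr rfl fun k _ => sum_nbij' Fin.tail (Fin.cons (α := fun _ => ℕ) k) ?_ ?_ ?_ ?_ ?_
  all_goals
    simp only [mem_filter, mem_consSlice]
    rintro ν hν
  · rw [← hν.2, Fin.cons_self_tail]; exact hν.1
  · simpa using hν
  · rw [← hν.2, Fin.cons_self_tail]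
  · simp
  · rw [← hν.2, Fin.cons_self_tail]

theorem card_eq_sum_card_consSlice {t : Finset ℕ} (ht : ∀ ν ∈ Λ, ν 0 ∈ t) :
    #Λ = ∑ k ∈ t, #(consSlice Λ k) := by
  simp only [card_eq_sum_ones]
  exact sum_eq_sum_sum_consSlice _ ht

end ConsSlice

theorem sum_supportWeight_le_card_rpow {N : ℕ} (Λ : Finset (Fin N → ℕ))
    (hΛ : IsLowerSet (Λ : Set (Fin N → ℕ))) :
    ∑ ν ∈ Λ, supportWeight ν ≤ (#Λ : ℝ) ^ Real.logb 2 3 := by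
  have hβ : 1 ≤ Real.logb 2 3 := by
    rw [Real.le_logb_iff_rpow_le one_lt_two (by norm_num)]; norm_num
  have h2β : (2 : ℝ) ^ Real.logb 2 3 - 1 = 2 := by
    rw [Real.rpow_logb two_pos (by norm_num) (by norm_num)]; norm_num
  induction N with
  | zero =>
    rcases Λ.eq_empty_or_nonempty with rfl | ⟨ν, hν⟩
    · simp only [sum_empty, card_empty, Nat.cast_zero]
      positivity
    · rw [eq_singleton_iff_unique_mem.mpr ⟨hν, fun _ _ => Subsingleton.elim _ _⟩]
      simp [supportWeight]
  | succ N ih =>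
    have ht : ∀ ν ∈ Λ, ν 0 ∈ range (Λ.sup (· 0) + 1) := fun ν hν =>
      mem_range_succ_iff.mpr (le_sup (f := (· 0)) hν)
    calc ∑ ν ∈ Λ, supportWeight ν
        = ∑ k ∈ range (Λ.sup (· 0)), 2 * ∑ μ ∈ consSlice Λ (k + 1), supportWeight μ
            + ∑ μ ∈ consSlice Λ 0, supportWeight μ := by
          simp [sum_eq_sum_sum_consSlice _ ht, sum_range_succ', supportWeight_cons, mul_sum]
      _ ≤ ∑ k ∈ range (Λ.sup (· 0)), 2 * (#(consSlice Λ (k + 1)) : ℝ) ^ Real.logb 2 3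
            + (#(consSlice Λ 0) : ℝ) ^ Real.logb 2 3 := by
          gcongr with k
          all_goals exact ih _ (isLowerSet_consSlice hΛ _)
      _ ≤ (∑ k ∈ range (Λ.sup (· 0)), (#(consSlice Λ (k + 1)) : ℝ) + #(consSlice Λ 0))
            ^ Real.logb 2 3 := by
          have key := rpow_add_mul_sum_rpow_le hβ (range (Λ.sup (· 0)))
            (fun k => (#(consSlice Λ (k + 1)) : ℝ)) (fun _ _ => by positivity)
            fun k _ => Nat.cast_le.mpr (card_le_card (consSlice_subset_consSlice_zero hΛ (k + 1)))
          rw [h2β] at key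
          rw [← mul_sum, add_comm (∑ k ∈ _, _)]
          linarith
      _ = (#Λ : ℝ) ^ Real.logb 2 3 := by
          rw [card_eq_sum_card_consSlice ht, sum_range_succ']; push_cast; rfl

theorem stmt_4_general (N : ℕ) (Λ : Finset (Fin N → ℕ))
    (hdc : ∀ ν ∈ Λ, ∀ μ : Fin N → ℕ, (∀ n, μ n ≤ ν n) → μ ∈ Λ) :
    (∑ ν ∈ Λ, (2 : ℝ) ^ ((Finset.univ.filter fun n : Fin N => 1 ≤ ν n).card))
      ≤ min ((Λ.card : ℝ) ^ (Real.log 3 / Real.log 2)) ((2 : ℝ) ^ N * Λ.card) := by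
  refine le_min (sum_supportWeight_le_card_rpow Λ fun ν μ hμν hν => hdc ν hν μ hμν) ?_
  calc ∑ ν ∈ Λ, supportWeight ν ≤ #Λ • (2 : ℝ) ^ N :=
        sum_le_card_nsmul _ _ _ fun ν _ => supportWeight_le_two_pow ν
    _ = 2 ^ N * #Λ := by rw [nsmul_eq_mul, mul_comm]

/-- For a finite, nonempty, downward-closed set `Λ ⊂ ℕ^N`
with `M = #Λ`, one has `∑_{ν ∈ Λ} 2^{#{n : ν_n ≥ 1}} ≤ min(M^{log 3 / log 2}, 2^N · M)`.
(The left-hand side is `Z(Λ)` for L²-normalized Chebyshev polynomials.) -/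
theorem stmt_4 (N : ℕ) (hN : 1 ≤ N) (Λ : Finset (Fin N → ℕ)) (hne : Λ.Nonempty)
    (hdc : ∀ ν ∈ Λ, ∀ μ : Fin N → ℕ, (∀ n, μ n ≤ ν n) → μ ∈ Λ) :
    (∑ ν ∈ Λ, (2 : ℝ) ^ ((Finset.univ.filter fun n : Fin N => 1 ≤ ν n).card))
      ≤ min ((Λ.card : ℝ) ^ (Real.log 3 / Real.log 2)) ((2 : ℝ) ^ N * Λ.card) :=
  stmt_4_general N Λ hdc
end

section
/- Let D be a nonempty set, N ≥ 1, and let a_0, a_1, …, a_N : D → ℝ be bounded functions. Suppose there is a_min > 0 such that the affine coefficient a(x, y) := a_0(x) + ∑_{k=1}^N y_k a_k(x) satisfies a(x, y) ≥ a_min for all x ∈ D and all y ∈ [−1, 1]^N. Then for every 0 < δ < a_min there exist φ_1, …, φ_N > 1 such that for all x ∈ D and all z = (z_1, …, z_N) ∈ ℂ^N with each z_k lying in the Bernstein ellipse E_{φ_k} := { (φ_k e^{iθ} + φ_k^{−1} e^{−iθ})/2 : θ ∈ [0, 2π) } (so Re(z_k) = ((φ_k + φ_k^{−1})/2) cos θ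 and Im(z_k) = ((φ_k − φ_k^{−1})/2) sin θ), one has Re( a_0(x) + ∑_{k=1}^N z_k a_k(x) ) ≥ δ. That is, every uniformly elliptic affine coefficient satisfies the (δ, φ)-polyellipse uniform ellipticity assumption for some polyellipse. -/
/-- Every uniformly elliptic affine coefficient
`a(x, y) = a_0(x) + ∑_k y_k a_k(x)` with bounded real coefficient functions,
satisfying `a(x, y) ≥ a_min > 0` for all `x ∈ D`, `y ∈ [−1,1]^N`, satisfies the
`(δ, φ)`-polyellipse uniform ellipticity assumption for every `0 < δ < a_min` and
some `φ_1, …, φ_N > 1`: `Re(a_0(x) + ∑_k z_k a_k(x)) ≥ δ` whenever each `z_k` lies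
on the Bernstein ellipse `E_{φ_k} = {(φ_k e^{iθ} + φ_k⁻¹ e^{−iθ})/2 : θ ∈ [0,2π)}`. -/
theorem stmt_9 (D : Type*) [Nonempty D] (N : ℕ) (hN : 1 ≤ N)
    (a₀ : D → ℝ) (a : Fin N → D → ℝ)
    (hb₀ : ∃ C : ℝ, ∀ x : D, |a₀ x| ≤ C)
    (hb : ∀ k : Fin N, ∃ C : ℝ, ∀ x : D, |a k x| ≤ C)
    (amin : ℝ) (hamin : 0 < amin)
    (hell : ∀ x : D, ∀ y : Fin N → ℝ, (∀ k, y k ∈ Set.Icc (-1 : ℝ) 1) →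
      amin ≤ a₀ x + ∑ k, y k * a k x)
    (δ : ℝ) (hδ0 : 0 < δ) (hδ : δ < amin) :
    ∃ φ : Fin N → ℝ, (∀ k, 1 < φ k) ∧
      ∀ x : D, ∀ z : Fin N → ℂ,
        (∀ k, ∃ θ : ℝ, z k = ((φ k : ℂ) * Complex.exp (θ * Complex.I) +
            (φ k : ℂ)⁻¹ * Complex.exp (-(θ : ℂ) * Complex.I)) / 2) →
        δ ≤ ((a₀ x : ℂ) + ∑ k, z k * (a k x : ℂ)).re := by
  choose Cb hCb using hb
  obtain ⟨C, hC⟩ : ∃ C : ℝ, C = 1 + ∑ k, |Cb k| := ⟨_, rfl⟩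
  have hCsum : (0:ℝ) ≤ ∑ k, |Cb k| := Finset.sum_nonneg fun k _ => abs_nonneg _
  have hCpos : 0 < C := by rw [hC]; positivity
  have hCbound : ∀ k x, |a k x| ≤ C := by
    intro k x
    calc |a k x| ≤ Cb k := hCb k x
    _ ≤ |Cb k| := le_abs_self _
    _ ≤ ∑ j, |Cb j| := Finset.single_le_sum (f := fun j => |Cb j|) (fun j _ => abs_nonneg _) (Finset.mem_univ k)
    _ ≤ C := by rw [hC]; linarith
  obtain ⟨t, htdef⟩ : ∃ t : ℝ, t = (amin - δ) / (N * C) := ⟨_, rfl⟩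
  have hNC : (0:ℝ) < N * C := by positivity
  have ht : 0 < t := htdef ▸ div_pos (by linarith) hNC
  obtain ⟨s, hsdef⟩ : ∃ s : ℝ, s = min 1 (Real.sqrt t) := ⟨_, rfl⟩
  have hs : 0 < s := hsdef ▸ lt_min one_pos (Real.sqrt_pos.2 ht)
  have hs2 : s ^ 2 ≤ t := by
    have h1 : s ≤ Real.sqrt t := hsdef ▸ min_le_right _ _
    nlinarith [Real.sq_sqrt ht.le, Real.sqrt_nonneg t]
  obtain ⟨φ₀, hφ₀⟩ : ∃ φ₀ : ℝ, φ₀ = 1 + s := ⟨_, rfl⟩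
  have hφ₀1 : 1 < φ₀ := by linarith
  have hφ₀pos : 0 < φ₀ := by linarith
  obtain ⟨r, hrdef⟩ : ∃ r : ℝ, r = (φ₀ + φ₀⁻¹) / 2 - 1 := ⟨_, rfl⟩
  have hr0 : 0 ≤ r := by
    rw [hrdef]
    have : φ₀ + φ₀⁻¹ ≥ 2 := by
      rw [ge_iff_le, ← sub_nonneg]
      have h := sq_nonneg (φ₀ - 1)
      have : φ₀ + φ₀⁻¹ - 2 = (φ₀ - 1)^2 / φ₀ := by field_simp; ring
      rw [this]; positivity
    linarith
  have hrt : r ≤ t := by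
    have hc : φ₀ * φ₀⁻¹ = 1 := mul_inv_cancel₀ (ne_of_gt hφ₀pos)
    have hinv_pos : 0 < φ₀⁻¹ := inv_pos.2 hφ₀pos
    have hinv : φ₀⁻¹ ≤ 1 - s + s ^ 2 := by nlinarith [hs.le, hφ₀]
    linarith [hrdef, hφ₀, hinv, hs2, ht.le]
  refine ⟨fun _ => φ₀, fun _ => hφ₀1, ?_⟩
  intro x z hz
  choose θ hθ using hz
  have hre : ∀ k : Fin N, (z k * (a k x : ℂ)).re = (1 + r) * Real.cos (θ k) * a k x := by
    intro k
    have hzre : (z k).re = (φ₀ + φ₀⁻¹) / 2 * Real.cos (θ k) := by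
      rw [hθ k]
      have h2 : (Complex.exp (-((θ k):ℂ) * Complex.I)).re = Real.cos (θ k) := by
        rw [show (-((θ k):ℂ)) = ((-(θ k):ℝ):ℂ) from by push_cast; ring,
          Complex.exp_ofReal_mul_I_re, Real.cos_neg]
      have h3 : (Complex.exp (-((θ k):ℂ) * Complex.I)).im = -Real.sin (θ k) := by
        rw [show (-((θ k):ℂ)) = ((-(θ k):ℝ):ℂ) from by push_cast; ring,
          Complex.exp_ofReal_mul_I_im, Real.sin_neg]
      simp only [Complex.div_re, Complex.add_re, Complex.add_im, Complex.mul_re, Complex.mul_im,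
        Complex.exp_ofReal_mul_I_re, Complex.exp_ofReal_mul_I_im, h2, h3,
        ← Complex.ofReal_inv, Complex.ofReal_re, Complex.ofReal_im, Complex.normSq]
      norm_num; ring
    rw [Complex.mul_re, Complex.ofReal_re, Complex.ofReal_im, mul_zero, sub_zero, hzre, hrdef]
    ring
  have hmain : amin ≤ a₀ x + ∑ k, Real.cos (θ k) * a k x := by
    apply hell x (fun k => Real.cos (θ k))
    intro k
    exact ⟨Real.neg_one_le_cos _, Real.cos_le_one _⟩
  have hpert : |∑ k, r * Real.cos (θ k) * a k x| ≤ N * (r * C) := by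
    calc |∑ k, r * Real.cos (θ k) * a k x| ≤ ∑ k, |r * Real.cos (θ k) * a k x| :=
          Finset.abs_sum_le_sum_abs _ _
    _ ≤ ∑ _k : Fin N, r * C := by
        apply Finset.sum_le_sum
        intro k _
        rw [abs_mul, abs_mul, abs_of_nonneg hr0]
        have h1 : |Real.cos (θ k)| ≤ 1 := Real.abs_cos_le_one _
        have h2 : |a k x| ≤ C := hCbound k x
        have := mul_le_mul h1 h2 (abs_nonneg _) zero_le_one
        rw [one_mul] at this
        calc r * |Real.cos (θ k)| * |a k x| ≤ r * (1 * C) := by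
              rw [mul_assoc]
              exact mul_le_mul_of_nonneg_left (mul_le_mul h1 h2 (abs_nonneg _) zero_le_one) hr0
        _ = r * C := by ring
    _ = N * (r * C) := by rw [Finset.sum_const, Finset.card_univ, Fintype.card_fin, nsmul_eq_mul]
  have hNrC : (N:ℝ) * (r * C) ≤ amin - δ := by
    have : (N:ℝ) * (r * C) ≤ N * (t * C) := by
      apply mul_le_mul_of_nonneg_left (mul_le_mul_of_nonneg_right hrt hCpos.le) (Nat.cast_nonneg _)
    have ht2 : (N:ℝ) * (t * C) = amin - δ := by
      rw [htdef]; field_simp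
    linarith
  have hsum : ((a₀ x : ℂ) + ∑ k, z k * (a k x : ℂ)).re
      = a₀ x + ∑ k, (1 + r) * Real.cos (θ k) * a k x := by
    rw [Complex.add_re, Complex.re_sum, Complex.ofReal_re]
    congr 1
    exact Finset.sum_congr rfl fun k _ => hre k
  rw [hsum]
  have hsplit : ∑ k, (1 + r) * Real.cos (θ k) * a k x
      = (∑ k, Real.cos (θ k) * a k x) + ∑ k, r * Real.cos (θ k) * a k x := by
    rw [← Finset.sum_add_distrib]
    exact Finset.sum_congr rfl fun k _ => by ring
  rw [hsplit]
  have habs := abs_le.mp hpert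
  linarith [habs.1]
end
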